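/- Let Λ ⊆ P be a finite-index sublattice of a lattice P. The induced map ι_p : Λ/pΛ → P/pP is injective for every prime p dividing [P:Λ] if and only if Λ = P. -/

import Mathlib

attribute [-instance] AddCommGroup.toIntModule

/-- The natural map `Λ/pΛ → P/pP` induced by the inclusion of a sublattice `Λ ⊆ P`. -/
noncomputable def inducedModP (P : Type*) [AddCommGroup P] [Module ℤ P]
    (Λ : Submodule ℤ P) (p : ℕ) :
    (Λ ⧸ ((Ideal.span {(p : ℤ)}) • (⊤ : Submodule ℤ Λ))) →ₗ[ℤ]
      (P ⧸ ((Ideal.span {(p : ℤ)}) • (⊤ : Submodule ℤ P))) :=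
  Submodule.mapQ ((Ideal.span {(p : ℤ)}) • (⊤ : Submodule ℤ Λ))
    ((Ideal.span {(p : ℤ)}) • (⊤ : Submodule ℤ P)) Λ.subtype
    (by
      have h := Submodule.smul_comap_le_comap_smul Λ.subtype (⊤ : Submodule ℤ P)
        (Ideal.span {(p : ℤ)})
      rwa [Submodule.comap_top] at h)

lemma inducedModP_mk (P : Type*) [AddCommGroup P] [Module ℤ P]
    (Λ : Submodule ℤ P) (p : ℕ) (x : Λ) :
    inducedModP P Λ p (Submodule.Quotient.mk x) = Submodule.Quotient.mk (x : P) := rfl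

/-- Let `Λ ⊆ P` be a finite-index sublattice of a finitely generated free `ℤ`-module `P`.
The induced map `ι_p : Λ/pΛ → P/pP` is injective for every prime `p` dividing the index
`[P : Λ]` if and only if `Λ = P`. -/
theorem stmt_4 (P : Type*) [AddCommGroup P] [Module ℤ P]
    [Module.Free ℤ P] [Module.Finite ℤ P]
    (Λ : Submodule ℤ P) (hfin : Λ.toAddSubgroup.index ≠ 0) :
    (∀ p : ℕ, p.Prime → p ∣ Λ.toAddSubgroup.index →
        Function.Injective (inducedModP P Λ p))
      ↔ Λ = ⊤ := by
  constructor
  · intro h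
    by_contra hne
    -- index > 1
    have hidx : Λ.toAddSubgroup.index ≠ 1 := by
      intro h1
      refine hne (Submodule.ext fun x => ?_)
      have := SetLike.ext_iff.mp (AddSubgroup.index_eq_one.mp h1) x
      simpa using this
    obtain ⟨p, hp, hpd⟩ := (Λ.toAddSubgroup.index).exists_prime_and_dvd hidx
    have hfinq : Finite (P ⧸ Λ.toAddSubgroup) := by
      rw [AddSubgroup.index_eq_card] at hfin
      exact Nat.finite_of_card_ne_zero hfin
    have : Fintype (P ⧸ Λ.toAddSubgroup) := Fintype.ofFinite _
    have hcard : p ∣ Fintype.card (P ⧸ Λ.toAddSubgroup) := by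
      rwa [AddSubgroup.index_eq_card, Nat.card_eq_fintype_card] at hpd
    haveI : Fact p.Prime := ⟨hp⟩
    obtain ⟨g, hg⟩ := exists_prime_addOrderOf_dvd_card p hcard
    obtain ⟨x, rfl⟩ := QuotientAddGroup.mk_surjective g
    have hgne : (QuotientAddGroup.mk x : P ⧸ Λ.toAddSubgroup) ≠ 0 := by
      intro h0
      rw [h0, addOrderOf_zero] at hg
      exact hp.one_lt.ne' hg.symm
    have hxnotin : x ∉ Λ := by
      intro hx
      exact hgne ((QuotientAddGroup.eq_zero_iff x).2 hx)
    have hpx : (p : ℤ) • x ∈ Λ := by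
      have : p • (QuotientAddGroup.mk x : P ⧸ Λ.toAddSubgroup) = 0 := by
        rw [← hg]; exact addOrderOf_nsmul_eq_zero _
      have : (QuotientAddGroup.mk (p • x) : P ⧸ Λ.toAddSubgroup) = 0 := by
        simpa using this
      have := (QuotientAddGroup.eq_zero_iff _).1 this
      simpa [natCast_zsmul] using this
    set z : Λ := ⟨(p : ℤ) • x, hpx⟩ with hzdef
    have hz0 : inducedModP P Λ p (Submodule.Quotient.mk z) = 0 := by
      rw [inducedModP_mk, Submodule.Quotient.mk_eq_zero]
      show (p : ℤ) • x ∈ _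
      rw [Submodule.ideal_span_singleton_smul]
      exact ⟨x, Submodule.mem_top, by simp [DistribSMul.toLinearMap_apply, natCast_zsmul, Nat.cast_smul_eq_nsmul]⟩
    have := h p hp hpd (a₁ := Submodule.Quotient.mk z) (a₂ := 0) (by simpa using hz0)
    rw [Submodule.Quotient.mk_eq_zero, Submodule.ideal_span_singleton_smul] at this
    obtain ⟨y, -, hy⟩ := this
    apply hxnotin
    have h2 : p • (y : P) = p • x := by
      have := congrArg (Subtype.val) hy
      simpa [hzdef, Nat.cast_smul_eq_nsmul, natCast_zsmul] using this
    let b := Module.Free.chooseBasis ℤ P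
    have h5 : p • b.repr (y : P) = p • b.repr x := by
      rw [← map_nsmul, ← map_nsmul, h2]
    have h6 : b.repr (y : P) = b.repr x := by
      ext a
      have h7 : p • (b.repr (y : P)) a = p • (b.repr x) a := by
        rw [← Finsupp.smul_apply, ← Finsupp.smul_apply, h5]
      rw [nsmul_eq_mul, nsmul_eq_mul] at h7
      exact mul_left_cancel₀ (show ((p : ℕ) : ℤ) ≠ 0 by exact_mod_cast hp.ne_zero) h7
    have hxy : (y : P) = x := b.repr.injective h6
    exact hxy ▸ y.2
  · rintro rfl
    intro p _ _
    intro a c hac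
    obtain ⟨a', rfl⟩ := Submodule.Quotient.mk_surjective _ a
    obtain ⟨b', rfl⟩ := Submodule.Quotient.mk_surjective _ c
    rw [inducedModP_mk, inducedModP_mk] at hac
    rw [Submodule.Quotient.eq] at hac
    apply (Submodule.Quotient.eq _).mpr
    rw [Submodule.ideal_span_singleton_smul] at hac ⊢
    obtain ⟨y, -, hy⟩ := hac
    refine ⟨⟨y, Submodule.mem_top⟩, Submodule.mem_top, ?_⟩
    apply Subtype.ext
    simpa [Nat.cast_smul_eq_nsmul] using hy
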